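/- Let V₁, V₂, V₃ be finite-dimensional 𝔽-vector spaces and f : V₁ → V₂, g : V₃ → V₂ linear maps, regarded as a persistence module M over the zigzag poset {•₁ ≤ •₂ ≥ •₃}. Suppose M ≅ ⊕_{i∈F} V_{I_i} is a decomposition into interval modules (F a finite index set). Then the multiplicities of the intervals are: #{i : I_i = {•₁}} = dim V₁ − rank f; #{i : I_i = {•₃}} = dim V₃ − rank g; #{i : I_i = {•₂}} = dim V₂ − rank f − rank g + dim(range f ∩ range g); #{i : I_i = {•₁,•₂}} = rank f − dim(range f ∩ range g); #{i : I_i = {•₂,•₃}} = rank g − dim(range f ∩ range g); #{i : I_i = {•₁,•₂,•₃}} = dim(range f ∩ range g). -/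

import Mathlib

open scoped Classical
open Module

noncomputable section

/-- A pointwise finite-dimensional persistence module over a poset `P`. -/
structure PersMod (𝔽 : Type) [Field 𝔽] (P : Type) [PartialOrder P] where
  V : P → Type
  [iAdd : ∀ p, AddCommGroup (V p)]
  [iMod : ∀ p, Module 𝔽 (V p)]
  [iFin : ∀ p, FiniteDimensional 𝔽 (V p)]
  φ : ∀ {p q : P}, p ≤ q → (V p →ₗ[𝔽] V q)
  φ_refl : ∀ p : P, φ (le_refl p) = LinearMap.id
  φ_comp : ∀ {p q r : P} (hpq : p ≤ q) (hqr : q ≤ r),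
    (φ hqr).comp (φ hpq) = φ (le_trans hpq hqr)

attribute [instance] PersMod.iAdd PersMod.iMod PersMod.iFin

/-- A poset is connected if any two elements are joined by a finite zigzag of
comparable elements. -/
def ZigzagConnected (P : Type) [PartialOrder P] : Prop :=
  ∀ p q : P, Relation.ReflTransGen (fun a b : P => a ≤ b ∨ b ≤ a) p q

section SetNotions

variable {P : Type} [PartialOrder P]

/-- Convexity of a subset of a poset. -/
def SetConvex (I : Set P) : Prop :=
  ∀ ⦃p q r : P⦄, p ∈ I → r ∈ I → p ≤ q → q ≤ r → q ∈ I

/-- Connectedness of a subset: any two points are joined by a zigzag of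
comparable elements staying inside the subset. -/
def SetZigzagConn (I : Set P) : Prop :=
  ∀ p ∈ I, ∀ q ∈ I,
    Relation.ReflTransGen (fun a b : P => a ∈ I ∧ b ∈ I ∧ (a ≤ b ∨ b ≤ a)) p q

/-- An interval of a poset: nonempty, convex and connected. -/
def IsIntervalSet (I : Set P) : Prop :=
  I.Nonempty ∧ SetConvex I ∧ SetZigzagConn I

/-- A path-connected subposet (member of `Con(P)`): nonempty and any two of its
points are joined by a sequence in `I` in which consecutive elements are related
by the covering relation of `P`. -/
def IsPathConnIn (I : Set P) : Prop :=
  I.Nonempty ∧ ∀ p ∈ I, ∀ q ∈ I,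
    Relation.ReflTransGen (fun a b : P => a ∈ I ∧ b ∈ I ∧ (a ⋖ b ∨ b ⋖ a)) p q

lemma setConvex_univ : SetConvex (Set.univ : Set P) := by
  intro p q r _ _ _ _; trivial

end SetNotions

namespace PersMod

variable {𝔽 : Type} [Field 𝔽] {P : Type} [PartialOrder P]

/-- The limit of a persistence module: the module of compatible sections. -/
def sections (M : PersMod 𝔽 P) : Submodule 𝔽 (∀ p, M.V p) where
  carrier := {x | ∀ (p q : P) (h : p ≤ q), M.φ h (x p) = x q}
  add_mem' := by
    intro x y hx hy p q h
    simp only [Pi.add_apply, map_add]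
    rw [hx p q h, hy p q h]
  zero_mem' := by intro p q h; simp
  smul_mem' := by
    intro c x hx p q h
    simp only [Pi.smul_apply, map_smul]
    rw [hx p q h]

/-- The relations defining the colimit of a persistence module. -/
def colimRel (M : PersMod 𝔽 P) : Submodule 𝔽 (DirectSum P fun p => M.V p) :=
  Submodule.span 𝔽 {z | ∃ (p q : P) (h : p ≤ q) (v : M.V p),
    z = DirectSum.lof 𝔽 P (fun p => M.V p) q (M.φ h v)
      - DirectSum.lof 𝔽 P (fun p => M.V p) p v}

/-- The colimit of a persistence module. -/
abbrev colim (M : PersMod 𝔽 P) :=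
  (DirectSum P fun p => M.V p) ⧸ M.colimRel

/-- The canonical map `lim M → colim M` factored through the value at `p`,
i.e. `ι_p ∘ π_p`. -/
def canonicalMapAt (M : PersMod 𝔽 P) (p : P) : M.sections →ₗ[𝔽] M.colim :=
  (M.colimRel.mkQ.comp (DirectSum.lof 𝔽 P (fun q => M.V q) p)).comp
    ((LinearMap.proj p).comp M.sections.subtype)

/-- The rank of the canonical map `lim M → colim M` computed through `p`. -/
def genRankAt (M : PersMod 𝔽 P) (p : P) : ℕ :=
  finrank 𝔽 (LinearMap.range (M.canonicalMapAt p))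

/-- The generalized rank of a persistence module over a (connected) poset. -/
def genRank (M : PersMod 𝔽 P) [Nonempty P] : ℕ :=
  M.genRankAt (Classical.arbitrary P)

/-- Restriction of a persistence module to a subposet. -/
def restrict (M : PersMod 𝔽 P) (I : Set P) : PersMod 𝔽 I where
  V := fun i => M.V i.val
  φ := fun {i j} h => M.φ h
  φ_refl := fun i => M.φ_refl i.val
  φ_comp := fun hpq hqr => M.φ_comp hpq hqr

/-- The generalized rank invariant: the generalized rank of the restriction
of `M` to `I`. -/
def rkInv (M : PersMod 𝔽 P) (I : Set P) : ℕ :=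
  if h : I.Nonempty then (M.restrict I).genRankAt ⟨h.choose, h.choose_spec⟩ else 0

/-- Finite direct sums of persistence modules. -/
def dSum {F : Type} [Fintype F] (Ms : F → PersMod 𝔽 P) : PersMod 𝔽 P where
  V := fun p => ∀ i, (Ms i).V p
  φ := fun {p q} h => LinearMap.pi fun i => ((Ms i).φ h).comp (LinearMap.proj i)
  φ_refl := by
    intro p
    refine LinearMap.ext fun x => funext fun i => ?_
    simp [(Ms i).φ_refl p]
  φ_comp := by
    intro p q r hpq hqr
    refine LinearMap.ext fun x => funext fun i => ?_
    simpa using LinearMap.congr_fun ((Ms i).φ_comp hpq hqr) (x i)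

/-- Binary direct sum of persistence modules. -/
def prodMod (M N : PersMod 𝔽 P) : PersMod 𝔽 P where
  V := fun p => M.V p × N.V p
  φ := fun h => (M.φ h).prodMap (N.φ h)
  φ_refl := by
    intro p
    refine LinearMap.ext fun x => ?_
    simp [M.φ_refl p, N.φ_refl p]
  φ_comp := by
    intro p q r h1 h2
    refine LinearMap.ext fun x => ?_
    have hM := LinearMap.congr_fun (M.φ_comp h1 h2) x.1
    have hN := LinearMap.congr_fun (N.φ_comp h1 h2) x.2
    simp only [LinearMap.comp_apply] at hM hN ⊢
    simp [hM, hN]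

/-- The zero persistence module. -/
def IsZero (M : PersMod 𝔽 P) : Prop := ∀ p, Subsingleton (M.V p)

/-- Isomorphism of persistence modules. -/
def Isom (M N : PersMod 𝔽 P) : Prop :=
  ∃ e : ∀ p, M.V p ≃ₗ[𝔽] N.V p,
    ∀ (p q : P) (h : p ≤ q) (v : M.V p), e q (M.φ h v) = N.φ h (e p v)

/-- Indecomposability of a persistence module. -/
def Indecomposable (M : PersMod 𝔽 P) : Prop :=
  ¬ M.IsZero ∧
    ∀ M₁ M₂ : PersMod 𝔽 P, M.Isom (M₁.prodMod M₂) → M₁.IsZero ∨ M₂.IsZero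

end PersMod

section IntervalModule

variable {P : Type} [PartialOrder P]

/-- The fiber of the interval module at `p`: all of `𝔽` if `p ∈ I`, and `0`
otherwise. -/
def fiber (𝔽 : Type) [Field 𝔽] (I : Set P) (p : P) : Submodule 𝔽 𝔽 where
  carrier := {x | p ∈ I ∨ x = 0}
  zero_mem' := Or.inr rfl
  add_mem' := by
    rintro x y (h | rfl) (h' | rfl)
    · exact Or.inl h
    · exact Or.inl h
    · exact Or.inl h'
    · exact Or.inr (add_zero 0)
  smul_mem' := by
    rintro c x (h | rfl)
    · exact Or.inl h
    · exact Or.inr (smul_zero c)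

/-- The interval module `V_I` of a convex subset `I ⊆ P`. -/
def intervalModule (𝔽 : Type) [Field 𝔽] (I : Set P) (hc : SetConvex I) :
    PersMod 𝔽 P where
  V := fun p => fiber 𝔽 I p
  φ := fun {p q} _h =>
    LinearMap.restrict (if q ∈ I then LinearMap.id else 0)
      (by
        intro x hx
        by_cases hq : q ∈ I
        · rw [if_pos hq]; exact Or.inl hq
        · rw [if_neg hq]; exact Or.inr rfl)
  φ_refl := by
    intro p
    refine LinearMap.ext fun x => Subtype.ext ?_
    rw [LinearMap.restrict_apply]
    by_cases hp : p ∈ I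
    · simp [hp]
    · rcases x.2 with h | h
      · exact absurd h hp
      · simp [hp, h]
  φ_comp := by
    intro p q r hpq hqr
    refine LinearMap.ext fun x => Subtype.ext ?_
    simp only [LinearMap.comp_apply, LinearMap.restrict_apply]
    by_cases hr : r ∈ I <;> by_cases hq : q ∈ I <;> simp [hr, hq]
    rcases x.2 with hp | h0
    · exact absurd (hc hp hr hpq hqr) hq
    · exact h0.symm

end IntervalModule

section Grid

variable {𝔽 : Type} [Field 𝔽]

lemma le_sub_e1 (p : ℤ × ℤ) : ((p.1 - 1, p.2) : ℤ × ℤ) ≤ p :=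
  Prod.le_def.mpr ⟨show p.1 - 1 ≤ p.1 by omega, le_rfl⟩

lemma le_sub_e2 (p : ℤ × ℤ) : ((p.1, p.2 - 1) : ℤ × ℤ) ≤ p :=
  Prod.le_def.mpr ⟨le_rfl, show p.2 - 1 ≤ p.2 by omega⟩

lemma le_sub_e12_e1 (p : ℤ × ℤ) : ((p.1 - 1, p.2 - 1) : ℤ × ℤ) ≤ (p.1 - 1, p.2) :=
  Prod.le_def.mpr ⟨le_rfl, show p.2 - 1 ≤ p.2 by omega⟩

lemma le_sub_e12_e2 (p : ℤ × ℤ) : ((p.1 - 1, p.2 - 1) : ℤ × ℤ) ≤ (p.1, p.2 - 1) :=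
  Prod.le_def.mpr ⟨show p.1 - 1 ≤ p.1 by omega, le_rfl⟩

/-- The `0`-th bigraded Betti number of `M : ℤ² → vec` at `p`, defined via the
Koszul complex as the dimension of the cokernel of
`M(p-e₁) ⊕ M(p-e₂) → M(p)`. -/
def beta0 (M : PersMod 𝔽 (ℤ × ℤ)) (p : ℤ × ℤ) : ℕ :=
  finrank 𝔽
    (M.V p ⧸ LinearMap.range ((M.φ (le_sub_e1 p)).coprod (M.φ (le_sub_e2 p))))

/-- The `2`-nd bigraded Betti number of `M : ℤ² → vec` at `p`, defined via the
Koszul complex as the dimension of the intersection of the kernels of the two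
structure maps out of `M(p-e₁-e₂)`. -/
def beta2 (M : PersMod 𝔽 (ℤ × ℤ)) (p : ℤ × ℤ) : ℕ :=
  finrank 𝔽
    ↥(LinearMap.ker (M.φ (le_sub_e12_e1 p)) ⊓ LinearMap.ker (M.φ (le_sub_e12_e2 p)))

/-- The `1`-st bigraded Betti number of `M : ℤ² → vec` at `p`, via the Koszul
complex characterization. -/
def beta1 (M : PersMod 𝔽 (ℤ × ℤ)) (p : ℤ × ℤ) : ℤ :=
  (beta0 M p : ℤ) + (beta2 M p : ℤ)
    - (finrank 𝔽 (M.V p) : ℤ) + (finrank 𝔽 (M.V (p.1 - 1, p.2)) : ℤ)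
    + (finrank 𝔽 (M.V (p.1, p.2 - 1)) : ℤ) - (finrank 𝔽 (M.V (p.1 - 1, p.2 - 1)) : ℤ)

/-- The maximal element of the grid `[m] × [n]` below a point `p ≥ (0,0)` of `ℤ²`. -/
def clamp (m n : ℕ) (p : ℤ × ℤ) : Fin (m + 1) × Fin (n + 1) :=
  (⟨min p.1.toNat m, Nat.lt_succ_of_le (min_le_right _ _)⟩,
   ⟨min p.2.toNat n, Nat.lt_succ_of_le (min_le_right _ _)⟩)

lemma clamp_mono {m n : ℕ} {p q : ℤ × ℤ} (h : p ≤ q) : clamp m n p ≤ clamp m n q := by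
  obtain ⟨h1, h2⟩ := Prod.le_def.mp h
  refine Prod.le_def.mpr ⟨?_, ?_⟩
  · exact Fin.mk_le_mk.mpr (min_le_min (Int.toNat_le_toNat h1) le_rfl)
  · exact Fin.mk_le_mk.mpr (min_le_min (Int.toNat_le_toNat h2) le_rfl)

/-- `M : ℤ² → vec` is encoded by `M' : [m] × [n] → vec`. -/
def IsEncodedBy {m n : ℕ} (M : PersMod 𝔽 (ℤ × ℤ))
    (M' : PersMod 𝔽 (Fin (m + 1) × Fin (n + 1))) : Prop :=
  (∀ p : ℤ × ℤ, ¬(0 ≤ p.1 ∧ 0 ≤ p.2) → Subsingleton (M.V p)) ∧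
  ∃ e : ∀ p : ℤ × ℤ, 0 ≤ p.1 → 0 ≤ p.2 → (M.V p ≃ₗ[𝔽] M'.V (clamp m n p)),
    ∀ (p q : ℤ × ℤ) (hp1 : 0 ≤ p.1) (hp2 : 0 ≤ p.2) (hq1 : 0 ≤ q.1) (hq2 : 0 ≤ q.2)
      (hpq : p ≤ q) (v : M.V p),
      e q hq1 hq2 (M.φ hpq v) = M'.φ (clamp_mono hpq) (e p hp1 hp2 v)

/-- A point `a ∈ ℤ²` "belongs" to `J ⊆ [m] × [n]` if it is a grid point lying in `J`. -/
def gridPt {m n : ℕ} (a : ℤ × ℤ) (J : Set (Fin (m + 1) × Fin (n + 1))) : Prop :=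
  ∃ x ∈ J, (((x.1 : ℕ) : ℤ), ((x.2 : ℕ) : ℤ)) = a

end Grid
/-- The three-element zigzag poset `•₁ ≤ •₂ ≥ •₃`. -/
inductive Zig3 : Type
  | p1 | p2 | p3
deriving DecidableEq

/-- Order relation of the zigzag poset `•₁ ≤ •₂ ≥ •₃`: `p1 ≤ p2` and `p3 ≤ p2`. -/
def Zig3.zle : Zig3 → Zig3 → Bool
  | .p1, .p1 => true
  | .p1, .p2 => true
  | .p2, .p2 => true
  | .p3, .p2 => true
  | .p3, .p3 => true
  | _, _ => false

instance : PartialOrder Zig3 where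
  le a b := Zig3.zle a b = true
  le_refl a := by cases a <;> rfl
  le_trans a b c h1 h2 := by
    cases a <;> cases b <;> cases c <;> simp_all [Zig3.zle]
  le_antisymm a b h1 h2 := by
    cases a <;> cases b <;> simp_all [Zig3.zle]

section ZigMod

variable {𝔽 : Type} [Field 𝔽] (V₁ V₂ V₃ : Type)
  [AddCommGroup V₁] [Module 𝔽 V₁] [AddCommGroup V₂] [Module 𝔽 V₂]
  [AddCommGroup V₃] [Module 𝔽 V₃]

/-- The underlying spaces of the zigzag module `V₁ → V₂ ← V₃`. -/
def zigV : Zig3 → Type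
  | .p1 => V₁
  | .p2 => V₂
  | .p3 => V₃

instance zigV.instAdd : ∀ x, AddCommGroup (zigV V₁ V₂ V₃ x)
  | .p1 => ‹_›
  | .p2 => ‹_›
  | .p3 => ‹_›

instance zigV.instMod : ∀ x, Module 𝔽 (zigV V₁ V₂ V₃ x)
  | .p1 => ‹_›
  | .p2 => ‹_›
  | .p3 => ‹_›

variable {V₁ V₂ V₃}

/-- The structure maps of the zigzag module determined by `f : V₁ → V₂` and
`g : V₃ → V₂`. -/
def zigφ (f : V₁ →ₗ[𝔽] V₂) (g : V₃ →ₗ[𝔽] V₂) :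
    ∀ p q : Zig3, zigV V₁ V₂ V₃ p →ₗ[𝔽] zigV V₁ V₂ V₃ q
  | .p1, .p1 => LinearMap.id
  | .p2, .p2 => LinearMap.id
  | .p3, .p3 => LinearMap.id
  | .p1, .p2 => f
  | .p3, .p2 => g
  | _, _ => 0

/-- The persistence module over the zigzag poset `•₁ ≤ •₂ ≥ •₃` determined by the
linear maps `f : V₁ → V₂` and `g : V₃ → V₂`. -/
def zigMod [FiniteDimensional 𝔽 V₁] [FiniteDimensional 𝔽 V₂] [FiniteDimensional 𝔽 V₃]
    (f : V₁ →ₗ[𝔽] V₂) (g : V₃ →ₗ[𝔽] V₂) : PersMod 𝔽 Zig3 where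
  V := zigV V₁ V₂ V₃
  iFin := fun x => by cases x <;> assumption
  φ := fun {p q} _h => zigφ f g p q
  φ_refl := fun p => by cases p <;> rfl
  φ_comp := fun {p q r} h1 h2 => by
    cases p <;> cases q <;> cases r <;>
      first
        | (have hz : Zig3.zle _ _ = true := h1; simp [Zig3.zle] at hz; done)
        | (have hz : Zig3.zle _ _ = true := h2; simp [Zig3.zle] at hz; done)
        | rfl

end ZigMod

/-!
Every quantity on the right-hand side is the dimension of `im φ(p ≤ q) ∩ im φ(r ≤ q)` for some
`p, r ≤ q` (with `p = r = q` for `dim V_q`, and `p = r` for a rank). These dimensions are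
invariant under isomorphism and additive over direct sums, and for an interval module `V_I` the
dimension is `1` if `p, q, r ∈ I` and `0` otherwise. Hence each of them counts the summands
whose interval contains `p`, `q` and `r`. The intervals of `•₁ ≤ •₂ ≥ •₃` are the six listed
ones (an interval containing `•₁` and `•₃` contains `•₂` by connectedness), so the multiplicities
are obtained by inclusion–exclusion.
-/

section PiSubmodule

variable {ι : Type*} {M N : ι → Type*}

lemma LinearMap.range_piMap {R : Type*} [Semiring R] [∀ i, AddCommMonoid (M i)]
    [∀ i, Module R (M i)] [∀ i, AddCommMonoid (N i)] [∀ i, Module R (N i)]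
    (f : ∀ i, M i →ₗ[R] N i) :
    range (LinearMap.piMap f) = Submodule.pi Set.univ fun i => range (f i) :=
  SetLike.coe_injective <| by
    rw [LinearMap.coe_range, LinearMap.coe_piMap, Set.range_piMap, Submodule.coe_pi]; rfl

lemma Submodule.pi_univ_inf {R : Type*} [Semiring R] [∀ i, AddCommMonoid (M i)]
    [∀ i, Module R (M i)] (p q : ∀ i, Submodule R (M i)) :
    pi Set.univ p ⊓ pi Set.univ q = pi Set.univ fun i => p i ⊓ q i :=
  SetLike.coe_injective <| by simp [Set.pi_inter_distrib]

lemma Submodule.finrank_pi_univ {K : Type*} [DivisionRing K] [Fintype ι]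
    [∀ i, AddCommGroup (M i)] [∀ i, Module K (M i)] [∀ i, FiniteDimensional K (M i)]
    (p : ∀ i, Submodule K (M i)) :
    finrank K (pi Set.univ p) = ∑ i, finrank K (p i) := by
  have hrange : pi Set.univ p = LinearMap.range (LinearMap.piMap fun i => (p i).subtype) := by
    simp_rw [LinearMap.range_piMap, range_subtype]
  rw [hrange, LinearMap.finrank_range_of_inj (.piMap fun i => (p i).injective_subtype),
    Module.finrank_pi_fintype]

end PiSubmodule

namespace PersMod

variable {𝔽 : Type} [Field 𝔽] {P : Type} [PartialOrder P] {p q r : P}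

def imageInf (M : PersMod 𝔽 P) (hp : p ≤ q) (hr : r ≤ q) : Submodule 𝔽 (M.V q) :=
  LinearMap.range (M.φ hp) ⊓ LinearMap.range (M.φ hr)

lemma imageInf_refl (M : PersMod 𝔽 P) : M.imageInf (le_refl q) (le_refl q) = ⊤ := by
  simp [imageInf, M.φ_refl]

lemma imageInf_self (M : PersMod 𝔽 P) (h : p ≤ q) :
    M.imageInf h h = LinearMap.range (M.φ h) :=
  inf_idem _

lemma finrank_imageInf_le (M : PersMod 𝔽 P) (hp : p ≤ q) (hr : r ≤ q) :
    finrank 𝔽 (M.imageInf hp hr)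
      ≤ min (finrank 𝔽 (M.V p)) (min (finrank 𝔽 (M.V q)) (finrank 𝔽 (M.V r))) :=
  le_min ((Submodule.finrank_mono inf_le_left).trans (LinearMap.finrank_range_le _)) <|
    le_min (Submodule.finrank_le _)
      ((Submodule.finrank_mono inf_le_right).trans (LinearMap.finrank_range_le _))

lemma map_range_φ {M N : PersMod 𝔽 P} (e : ∀ p, M.V p ≃ₗ[𝔽] N.V p)
    (he : ∀ (p q : P) (h : p ≤ q) (v : M.V p), e q (M.φ h v) = N.φ h (e p v)) (h : p ≤ q) :
    (LinearMap.range (M.φ h)).map (e q : M.V q →ₗ[𝔽] N.V q) = LinearMap.range (N.φ h) := by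
  have hcomm :
      (e q : M.V q →ₗ[𝔽] N.V q) ∘ₗ M.φ h = N.φ h ∘ₗ (e p : M.V p →ₗ[𝔽] N.V p) :=
    LinearMap.ext (he p q h)
  rw [← LinearMap.range_comp, hcomm, LinearMap.range_comp_of_range_eq_top _ (e p).range]

lemma Isom.finrank_imageInf_eq {M N : PersMod 𝔽 P} (hMN : M.Isom N) (hp : p ≤ q)
    (hr : r ≤ q) : finrank 𝔽 (M.imageInf hp hr) = finrank 𝔽 (N.imageInf hp hr) := by
  obtain ⟨e, he⟩ := hMN
  rw [← (e q).finrank_map_eq, imageInf, imageInf, Submodule.map_inf _ (e q).injective,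
    map_range_φ e he, map_range_φ e he]

lemma imageInf_dSum {F : Type} [Fintype F] (Ms : F → PersMod 𝔽 P) (hp : p ≤ q)
    (hr : r ≤ q) :
    (dSum Ms).imageInf hp hr = Submodule.pi Set.univ fun i => (Ms i).imageInf hp hr :=
  (congrArg₂ (· ⊓ ·) (LinearMap.range_piMap _) (LinearMap.range_piMap _)).trans
    (Submodule.pi_univ_inf _ _)

lemma finrank_imageInf_dSum {F : Type} [Fintype F] (Ms : F → PersMod 𝔽 P) (hp : p ≤ q)
    (hr : r ≤ q) :
    finrank 𝔽 ((dSum Ms).imageInf hp hr) = ∑ i, finrank 𝔽 ((Ms i).imageInf hp hr) := by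
  rw [imageInf_dSum]
  exact Submodule.finrank_pi_univ _

end PersMod

section IntervalModule

variable {𝔽 : Type} [Field 𝔽] {P : Type} [PartialOrder P] {I : Set P} {p q r : P}

lemma finrank_intervalModule_V (hc : SetConvex I) (p : P) :
    finrank 𝔽 ((intervalModule 𝔽 I hc).V p) = if p ∈ I then 1 else 0 := by
  change finrank 𝔽 (fiber 𝔽 I p) = _
  split_ifs with hp
  · rw [show fiber 𝔽 I p = ⊤ from eq_top_iff.2 fun _ _ => Or.inl hp, finrank_top,
      finrank_self]
  · have : Subsingleton (fiber 𝔽 I p) :=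
      ⟨fun x y => Subtype.ext ((x.2.resolve_left hp).trans (y.2.resolve_left hp).symm)⟩
    exact finrank_zero_of_subsingleton

lemma range_intervalModule_φ (hc : SetConvex I) (h : p ≤ q) (hp : p ∈ I) (hq : q ∈ I) :
    LinearMap.range ((intervalModule 𝔽 I hc).φ h) = ⊤ :=
  LinearMap.range_eq_top.2 fun y =>
    ⟨⟨y.1, Or.inl hp⟩, Subtype.ext (by simp [intervalModule, hq]; rfl)⟩

lemma finrank_imageInf_intervalModule (hc : SetConvex I) (hp : p ≤ q) (hr : r ≤ q) :
    finrank 𝔽 ((intervalModule 𝔽 I hc).imageInf hp hr)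
      = if p ∈ I ∧ q ∈ I ∧ r ∈ I then 1 else 0 := by
  split_ifs with h
  · obtain ⟨hpI, hqI, hrI⟩ := h
    rw [PersMod.imageInf, range_intervalModule_φ hc hp hpI hqI,
      range_intervalModule_φ hc hr hrI hqI, inf_top_eq, finrank_top, finrank_intervalModule_V,
      if_pos hqI]
  · have hle := (intervalModule 𝔽 I hc).finrank_imageInf_le hp hr
    simp only [finrank_intervalModule_V] at hle
    split_ifs at hle <;> first | omega | tauto

end IntervalModule

section IntervalDecomposition

variable {𝔽 : Type} [Field 𝔽] {P : Type} [PartialOrder P] {F : Type} [Fintype F]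
  {Is : F → Set P} {hc : ∀ i, SetConvex (Is i)} {M : PersMod 𝔽 P} {p q r : P}

lemma finrank_imageInf_of_isom_dSum
    (hM : M.Isom (PersMod.dSum fun i => intervalModule 𝔽 (Is i) (hc i))) (hp : p ≤ q)
    (hr : r ≤ q) :
    finrank 𝔽 (M.imageInf hp hr)
      = ∑ i, if p ∈ Is i ∧ q ∈ Is i ∧ r ∈ Is i then 1 else 0 := by
  rw [hM.finrank_imageInf_eq, PersMod.finrank_imageInf_dSum]
  exact Finset.sum_congr rfl fun i _ => finrank_imageInf_intervalModule (hc i) hp hr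

lemma finrank_V_of_isom_dSum
    (hM : M.Isom (PersMod.dSum fun i => intervalModule 𝔽 (Is i) (hc i))) (p : P) :
    finrank 𝔽 (M.V p) = ∑ i, if p ∈ Is i then 1 else 0 := by
  rw [← finrank_top, ← M.imageInf_refl, finrank_imageInf_of_isom_dSum hM]
  simp only [and_self]

lemma finrank_range_φ_of_isom_dSum
    (hM : M.Isom (PersMod.dSum fun i => intervalModule 𝔽 (Is i) (hc i))) (h : p ≤ q) :
    finrank 𝔽 (LinearMap.range (M.φ h))
      = ∑ i, if p ∈ Is i ∧ q ∈ Is i then 1 else 0 := by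
  rw [← M.imageInf_self, finrank_imageInf_of_isom_dSum hM]
  exact Finset.sum_congr rfl fun i _ => if_congr (by tauto) rfl rfl

end IntervalDecomposition

namespace Zig3

lemma forall_iff {C : Zig3 → Prop} : (∀ x, C x) ↔ C p1 ∧ C p2 ∧ C p3 :=
  ⟨fun h => ⟨h p1, h p2, h p3⟩, fun ⟨h1, h2, h3⟩ x => by cases x <;> assumption⟩

lemma p2_mem_of_setZigzagConn {I : Set Zig3} (hI : SetZigzagConn I) (h1 : p1 ∈ I)
    (h3 : p3 ∈ I) : p2 ∈ I := by
  by_contra h2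
  have stuck : ∀ x,
      Relation.ReflTransGen (fun a b : Zig3 => a ∈ I ∧ b ∈ I ∧ (a ≤ b ∨ b ≤ a)) p1 x →
        x = p1 := by
    intro x hx
    induction hx with
    | refl => rfl
    | @tail b c _ hbc ih =>
      subst ih
      obtain ⟨-, hc, hle⟩ := hbc
      cases c with
      | p1 => rfl
      | p2 => exact absurd hc h2
      | p3 => rcases hle with hle | hle <;> exact Bool.noConfusion hle
  exact Zig3.noConfusion (stuck p3 (hI _ h1 _ h3))

lemma eq_of_isIntervalSet {I : Set Zig3} (hI : IsIntervalSet I) :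
    I = {p1} ∨ I = {p2} ∨ I = {p3} ∨ I = {p1, p2} ∨ I = {p2, p3} ∨ I = {p1, p2, p3} := by
  obtain ⟨⟨x, hx⟩, -, hconn⟩ := hI
  have h13 := p2_mem_of_setZigzagConn hconn
  simp only [Set.ext_iff, forall_iff, Set.mem_insert_iff, Set.mem_singleton_iff]
  cases x <;> by_cases h1 : p1 ∈ I <;> by_cases h2 : p2 ∈ I <;> by_cases h3 : p3 ∈ I <;>
    simp_all

end Zig3

/-- Interval multiplicities of a zigzag module
`V₁ —f→ V₂ ←g— V₃` over the poset `•₁ ≤ •₂ ≥ •₃`, in terms of ranks of `f`, `g`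
and the dimension of `range f ∩ range g`. -/
theorem zigzag_multiplicities (𝔽 : Type) [Field 𝔽] (V₁ V₂ V₃ : Type)
    [AddCommGroup V₁] [Module 𝔽 V₁] [FiniteDimensional 𝔽 V₁]
    [AddCommGroup V₂] [Module 𝔽 V₂] [FiniteDimensional 𝔽 V₂]
    [AddCommGroup V₃] [Module 𝔽 V₃] [FiniteDimensional 𝔽 V₃]
    (f : V₁ →ₗ[𝔽] V₂) (g : V₃ →ₗ[𝔽] V₂)
    (F : Type) [Fintype F] (Is : F → Set Zig3) (hI : ∀ i, IsIntervalSet (Is i))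
    (hiso : (zigMod f g).Isom (PersMod.dSum fun i => intervalModule 𝔽 (Is i) (hI i).2.1)) :
    (Nat.card {i : F // Is i = {Zig3.p1}} : ℤ)
        = (Module.finrank 𝔽 V₁ : ℤ) - (Module.finrank 𝔽 (LinearMap.range f) : ℤ) ∧
    (Nat.card {i : F // Is i = {Zig3.p3}} : ℤ)
        = (Module.finrank 𝔽 V₃ : ℤ) - (Module.finrank 𝔽 (LinearMap.range g) : ℤ) ∧
    (Nat.card {i : F // Is i = {Zig3.p2}} : ℤ)
        = (Module.finrank 𝔽 V₂ : ℤ) - (Module.finrank 𝔽 (LinearMap.range f) : ℤ)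
          - (Module.finrank 𝔽 (LinearMap.range g) : ℤ)
          + (Module.finrank 𝔽 ↥(LinearMap.range f ⊓ LinearMap.range g) : ℤ) ∧
    (Nat.card {i : F // Is i = {Zig3.p1, Zig3.p2}} : ℤ)
        = (Module.finrank 𝔽 (LinearMap.range f) : ℤ)
          - (Module.finrank 𝔽 ↥(LinearMap.range f ⊓ LinearMap.range g) : ℤ) ∧
    (Nat.card {i : F // Is i = {Zig3.p2, Zig3.p3}} : ℤ)
        = (Module.finrank 𝔽 (LinearMap.range g) : ℤ)
          - (Module.finrank 𝔽 ↥(LinearMap.range f ⊓ LinearMap.range g) : ℤ) ∧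
    (Nat.card {i : F // Is i = {Zig3.p1, Zig3.p2, Zig3.p3}} : ℤ)
        = (Module.finrank 𝔽 ↥(LinearMap.range f ⊓ LinearMap.range g) : ℤ) := by
  have h12 : Zig3.p1 ≤ Zig3.p2 := rfl
  have h32 : Zig3.p3 ≤ Zig3.p2 := rfl
  have dim₁ : finrank 𝔽 V₁ = _ := finrank_V_of_isom_dSum hiso Zig3.p1
  have dim₂ : finrank 𝔽 V₂ = _ := finrank_V_of_isom_dSum hiso Zig3.p2
  have dim₃ : finrank 𝔽 V₃ = _ := finrank_V_of_isom_dSum hiso Zig3.p3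
  have rank_f : finrank 𝔽 (LinearMap.range f) = _ := finrank_range_φ_of_isom_dSum hiso h12
  have rank_g : finrank 𝔽 (LinearMap.range g) = _ := finrank_range_φ_of_isom_dSum hiso h32
  have rank_fg : finrank 𝔽 ↥(LinearMap.range f ⊓ LinearMap.range g) = _ :=
    finrank_imageInf_of_isom_dSum hiso h12 h32
  have card (S : Set Zig3) : Nat.card {i // Is i = S} = ∑ i, if Is i = S then 1 else 0 := by
    rw [Nat.card_eq_fintype_card, Fintype.card_subtype, Finset.card_filter]
  refine ⟨?_, ?_, ?_, ?_, ?_, ?_⟩ <;>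
  · simp only [card, dim₁, dim₂, dim₃, rank_f, rank_g, rank_fg, Nat.cast_sum, Nat.cast_ite,
      Nat.cast_one, Nat.cast_zero, ← Finset.sum_sub_distrib, ← Finset.sum_add_distrib]
    refine Finset.sum_congr rfl fun i _ => ?_
    rcases Zig3.eq_of_isIntervalSet (hI i) with h | h | h | h | h | h <;>
      simp [h, Set.ext_iff, Zig3.forall_iff]
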